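/- Lippmann–Schwinger identity for the boundary value from below: for every k > 0 and every x ∈ ℝ, the integral ∫_ℝ e^{−ik·|x−y|}·sech²(m y)·E_k(y) dy converges absolutely and E_k(x) + (3·i·m²/k)·∫_ℝ e^{−ik·|x−y|}·sech²(m y)·E_k(y) dy = S(k)·e^{ikx}, where S(k) = (−k² − 3imk + 2m²)²/((k²+m²)·(k²+4m²)) is the scattering phase factor e^{2iδ_k}. -/

import Mathlib

open MeasureTheory

noncomputable def sech (x : ℝ) : ℝ := 1 / Real.cosh x

noncomputable def cNorm (m k : ℝ) : ℂ :=
  if 0 ≤ k then -(k : ℂ) ^ 2 - 3 * Complex.I * (m : ℂ) * (k : ℂ) + 2 * (m : ℂ) ^ 2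
  else -(k : ℂ) ^ 2 + 3 * Complex.I * (m : ℂ) * (k : ℂ) + 2 * (m : ℂ) ^ 2

noncomputable def genEig (m k : ℝ) (x : ℝ) : ℂ :=
  cNorm m k *
    (-(k : ℂ) ^ 2 - 3 * Complex.I * (m : ℂ) * (k : ℂ) * (Real.tanh (m * x) : ℂ)
      + 2 * (m : ℂ) ^ 2 - 3 * (m : ℂ) ^ 2 * (sech (m * x) : ℂ) ^ 2) *
    Complex.exp (Complex.I * (k : ℂ) * (x : ℂ)) /
    (((k : ℂ) ^ 2 + (m : ℂ) ^ 2) * ((k : ℂ) ^ 2 + 4 * (m : ℂ) ^ 2))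

/-- The scattering phase factor `e^{2iδ_k}`. -/
noncomputable def scatteringFactor (m k : ℝ) : ℂ :=
  (-(k : ℂ) ^ 2 - 3 * Complex.I * (m : ℂ) * (k : ℂ) + 2 * (m : ℂ) ^ 2) ^ 2 /
    (((k : ℂ) ^ 2 + (m : ℂ) ^ 2) * ((k : ℂ) ^ 2 + 4 * (m : ℂ) ^ 2))


open Filter Set Topology

lemma sech_pos (x : ℝ) : 0 < sech x := div_pos one_pos (Real.cosh_pos x)

lemma sech_le_one (x : ℝ) : sech x ≤ 1 := by
  rw [sech, div_le_one (Real.cosh_pos x)]; exact Real.one_le_cosh x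

lemma tanh_sq_add_sech_sq (x : ℝ) : Real.tanh x ^ 2 + sech x ^ 2 = 1 := by
  have h := Real.cosh_sq_sub_sinh_sq x
  have hc := (Real.cosh_pos x).ne'
  rw [Real.tanh_eq_sinh_div_cosh]; simp only [sech]
  field_simp
  linarith

lemma abs_tanh_le_one (x : ℝ) : |Real.tanh x| ≤ 1 := by
  rw [abs_le_one_iff_mul_self_le_one]
  nlinarith [tanh_sq_add_sech_sq x, sq_nonneg (sech x)]

lemma hasDerivAt_tanh (x : ℝ) : HasDerivAt Real.tanh (sech x ^ 2) x := by
  have h := (Real.hasDerivAt_sinh x).div (Real.hasDerivAt_cosh x) (Real.cosh_pos x).ne'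
  have heq : Real.tanh = fun y => Real.sinh y / Real.cosh y := funext Real.tanh_eq_sinh_div_cosh
  rw [heq]
  refine h.congr_deriv ?_
  have h2 := Real.cosh_sq_sub_sinh_sq x
  have hc := (Real.cosh_pos x).ne'
  simp only [sech]
  field_simp
  linarith

lemma hasDerivAt_sech (x : ℝ) : HasDerivAt sech (-(Real.tanh x * sech x)) x := by
  have h := (hasDerivAt_const x (1:ℝ)).div (Real.hasDerivAt_cosh x) (Real.cosh_pos x).ne'
  have heq : sech = fun y => 1 / Real.cosh y := rfl
  rw [heq]
  refine h.congr_deriv ?_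
  have hc := (Real.cosh_pos x).ne'
  rw [Real.tanh_eq_sinh_div_cosh]; simp only [sech]
  field_simp
  ring

lemma continuous_sech : Continuous sech :=
  continuous_const.div Real.continuous_cosh fun x => (Real.cosh_pos x).ne'

lemma continuous_tanh : Continuous Real.tanh := by
  rw [funext Real.tanh_eq_sinh_div_cosh]
  exact Real.continuous_sinh.div Real.continuous_cosh fun x => (Real.cosh_pos x).ne'

lemma tendsto_tanh_atTop : Tendsto Real.tanh atTop (𝓝 1) := by
  have key : ∀ x : ℝ, Real.tanh x = 1 - 2 / (Real.exp x * Real.exp x + 1) := by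
    intro x
    have hb : (0:ℝ) < Real.exp x := Real.exp_pos x
    have hne : Real.exp x * Real.exp x + 1 ≠ 0 := by positivity
    rw [Real.tanh_eq_sinh_div_cosh, Real.sinh_eq, Real.cosh_eq, Real.exp_neg]
    have h2 : Real.exp x + (Real.exp x)⁻¹ ≠ 0 := by positivity
    field_simp
    ring
  have h1 : Tendsto (fun x : ℝ => Real.exp x * Real.exp x + 1) atTop atTop :=
    (Real.tendsto_exp_atTop.atTop_mul_atTop₀ Real.tendsto_exp_atTop).atTop_add tendsto_const_nhds
  have h2 : Tendsto (fun x : ℝ => 2 / (Real.exp x * Real.exp x + 1)) atTop (𝓝 0) :=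
    Tendsto.div_atTop tendsto_const_nhds h1
  have h3 := (tendsto_const_nhds (x := (1:ℝ)) (f := atTop)).sub h2
  rw [sub_zero] at h3
  exact Tendsto.congr (fun x => (key x).symm) h3

lemma tendsto_cosh_atTop : Tendsto Real.cosh atTop atTop := by
  apply tendsto_atTop_mono (g := Real.cosh) (f := fun x => Real.exp x / 2)
  · intro x
    have := (Real.exp_pos (-x)).le
    rw [Real.cosh_eq]; linarith
  · exact Real.tendsto_exp_atTop.atTop_div_const two_pos

lemma tendsto_cosh_atBot : Tendsto Real.cosh atBot atTop := by
  apply tendsto_atTop_mono (g := Real.cosh) (f := fun x => Real.exp (-x) / 2)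
  · intro x
    have := (Real.exp_pos x).le
    rw [Real.cosh_eq]; linarith
  · exact (Real.tendsto_exp_atTop.comp tendsto_neg_atBot_atTop).atTop_div_const two_pos

lemma tendsto_sech_atTop : Tendsto sech atTop (𝓝 0) := by
  have h := tendsto_cosh_atTop.inv_tendsto_atTop
  exact Tendsto.congr (fun x => (one_div (Real.cosh x)).symm) h

lemma tendsto_sech_atBot : Tendsto sech atBot (𝓝 0) := by
  have h := tendsto_cosh_atBot.inv_tendsto_atTop
  exact Tendsto.congr (fun x => (one_div (Real.cosh x)).symm) h

lemma hasDerivAt_tanh_mul (m y : ℝ) :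
    HasDerivAt (fun y : ℝ => Real.tanh (m * y)) (m * sech (m * y) ^ 2) y := by
  have h0 : HasDerivAt (fun y : ℝ => m * y) m y := by
    simpa using (hasDerivAt_id y).const_mul m
  have := (hasDerivAt_tanh (m * y)).comp y h0
  simpa [mul_comm, Function.comp_def] using this

lemma hasDerivAt_sech_mul (m y : ℝ) :
    HasDerivAt (fun y : ℝ => sech (m * y)) (-(m * Real.tanh (m * y) * sech (m * y))) y := by
  have h0 : HasDerivAt (fun y : ℝ => m * y) m y := by
    simpa using (hasDerivAt_id y).const_mul m
  have := (hasDerivAt_sech (m * y)).comp y h0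
  refine this.congr_deriv ?_
  ring

lemma integrable_sech_sq (m : ℝ) (hm : 0 < m) :
    Integrable (fun y : ℝ => sech (m * y) ^ 2) := by
  have hderiv : ∀ y : ℝ, HasDerivAt (fun y : ℝ => Real.tanh (m * y) / m) (sech (m * y) ^ 2) y := by
    intro y
    have := (hasDerivAt_tanh_mul m y).div_const m
    refine this.congr_deriv ?_
    field_simp
  have hIoi : IntegrableOn (fun y : ℝ => sech (m * y) ^ 2) (Set.Ioi 0) := by
    apply integrableOn_Ioi_deriv_of_nonneg' (g := fun y : ℝ => Real.tanh (m * y) / m)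
      (l := 1 / m) (fun y _ => hderiv y) (fun y _ => by positivity)
    have h1 : Tendsto (fun y : ℝ => m * y) atTop atTop := tendsto_id.const_mul_atTop hm
    exact (tendsto_tanh_atTop.comp h1).div_const m
  have hIic : IntegrableOn (fun y : ℝ => sech (m * y) ^ 2) (Set.Iic 0) := by
    refine integrableOn_Iic_of_intervalIntegral_norm_bounded (l := atTop)
      (a := fun n : ℕ => -(n : ℝ)) (2 / m) 0 (fun i => ?_) ?_ ?_
    · exact ((continuous_sech.comp (continuous_const.mul continuous_id)).pow 2).integrableOn_Ioc
    · exact tendsto_neg_atTop_atBot.comp tendsto_natCast_atTop_atTop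
    · filter_upwards with i
      have hval : ∫ y in (-(i:ℝ))..0, ‖sech (m * y) ^ 2‖ = ∫ y in (-(i:ℝ))..0, sech (m * y) ^ 2 := by
        congr 1
        funext y
        rw [Real.norm_eq_abs, abs_of_nonneg (sq_nonneg _)]
      rw [hval, intervalIntegral.integral_eq_sub_of_hasDerivAt
        (f := fun y : ℝ => Real.tanh (m * y) / m) (fun y _ => hderiv y)
        (((continuous_sech.comp (continuous_const.mul continuous_id)).pow 2).intervalIntegrable _ _)]
      have h2 := abs_le.1 (abs_tanh_le_one (m * -(i:ℝ)))
      rw [mul_zero, Real.tanh_zero, zero_div, zero_sub, neg_div', div_le_div_iff₀ hm hm]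
      nlinarith [h2.1]
  rw [← integrableOn_univ, ← Set.Iic_union_Ioi (a := (0:ℝ)), integrableOn_union]
  exact ⟨hIic, hIoi⟩

noncomputable def Pc (m k y : ℝ) : ℂ :=
  -(k : ℂ) ^ 2 - 3 * Complex.I * (m : ℂ) * (k : ℂ) * (Real.tanh (m * y) : ℂ)
    + 2 * (m : ℂ) ^ 2 - 3 * (m : ℂ) ^ 2 * (sech (m * y) : ℂ) ^ 2

lemma sech_sq_complex (m y : ℝ) :
    ((sech (m * y) : ℝ) : ℂ) ^ 2 = 1 - ((Real.tanh (m * y) : ℝ) : ℂ) ^ 2 := by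
  have h2 : sech (m * y) ^ 2 = 1 - Real.tanh (m * y) ^ 2 := by
    linarith [tanh_sq_add_sech_sq (m * y)]
  exact_mod_cast congrArg (fun r : ℝ => (r : ℂ)) h2

lemma hasDerivAt_tanhC (m k y : ℝ) :
    HasDerivAt (fun y : ℝ => ((Real.tanh (m * y) : ℝ) : ℂ))
      ((m : ℂ) * ((sech (m * y) : ℝ) : ℂ) ^ 2) y := by
  have := (hasDerivAt_tanh_mul m y).ofReal_comp
  convert this using 1
  push_cast
  ring

lemma hasDerivAt_sechC (m k y : ℝ) :
    HasDerivAt (fun y : ℝ => ((sech (m * y) : ℝ) : ℂ))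
      (-((m : ℂ) * ((Real.tanh (m * y) : ℝ) : ℂ) * ((sech (m * y) : ℝ) : ℂ))) y := by
  have := (hasDerivAt_sech_mul m y).ofReal_comp
  convert this using 1
  push_cast
  ring

lemma hasDerivAt_expC (k y : ℝ) :
    HasDerivAt (fun y : ℝ => Complex.exp (2 * Complex.I * (k : ℂ) * (y : ℂ)))
      (2 * Complex.I * (k : ℂ) * Complex.exp (2 * Complex.I * (k : ℂ) * (y : ℂ))) y := by
  have h1 : HasDerivAt (fun z : ℂ => 2 * Complex.I * (k : ℂ) * z) (2 * Complex.I * (k : ℂ)) (y : ℂ) := by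
    simpa using (hasDerivAt_id (y : ℂ)).const_mul (2 * Complex.I * (k : ℂ))
  have h2 := (Complex.hasDerivAt_exp (2 * Complex.I * (k : ℂ) * (y : ℂ))).comp (y : ℂ) h1
  have h3 := h2.comp_ofReal
  refine h3.congr_deriv ?_
  ring

lemma hasDerivAt_G (m k : ℝ) (y : ℝ) :
    HasDerivAt (fun y : ℝ => Complex.exp (2 * Complex.I * (k : ℂ) * (y : ℂ)) *
        ((sech (m * y) : ℂ) ^ 2 * (Complex.I * (k : ℂ) / 2 - (m : ℂ) * (Real.tanh (m * y) : ℂ))))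
      (Complex.exp (2 * Complex.I * (k : ℂ) * (y : ℂ)) * ((sech (m * y) : ℂ) ^ 2 * Pc m k y)) y := by
  have hq : HasDerivAt (fun y : ℝ => Complex.I * (k : ℂ) / 2 - (m : ℂ) * (Real.tanh (m * y) : ℂ))
      (-((m : ℂ) * ((m : ℂ) * ((sech (m * y) : ℝ) : ℂ) ^ 2))) y :=
    HasDerivAt.const_sub (Complex.I * (k : ℂ) / 2) ((hasDerivAt_tanhC m k y).const_mul (m : ℂ))
  have hs2 := (hasDerivAt_sechC m k y).mul (hasDerivAt_sechC m k y)
  have hprod := (hasDerivAt_expC k y).mul (hs2.mul hq)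
  have hG2 : HasDerivAt (fun y : ℝ => Complex.exp (2 * Complex.I * (k : ℂ) * (y : ℂ)) *
      (((sech (m * y) : ℂ) * (sech (m * y) : ℂ)) *
        (Complex.I * (k : ℂ) / 2 - (m : ℂ) * (Real.tanh (m * y) : ℂ)))) _ y := hprod
  simp only [pow_two]
  refine hG2.congr_deriv ?_
  symm
  have hs := sech_sq_complex m y
  simp only [Pc]
  simp only [Pi.mul_apply]
  linear_combination (-(k:ℂ)^2 * ((sech (m*y):ℝ):ℂ)^2 * Complex.exp (2*Complex.I*(k:ℂ)*(y:ℂ))) * Complex.I_sq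
    + (-2*(m:ℂ)^2 * ((sech (m*y):ℝ):ℂ)^2 * Complex.exp (2*Complex.I*(k:ℂ)*(y:ℂ))) * hs

lemma hasDerivAt_F (m k : ℝ) (hm : m ≠ 0) (y : ℝ) :
    HasDerivAt (fun y : ℝ => (-(k : ℂ) ^ 2 - (m : ℂ) ^ 2) / (m : ℂ) * (Real.tanh (m * y) : ℂ)
        + 3 * Complex.I * (k : ℂ) / 2 * (sech (m * y) : ℂ) ^ 2
        + (m : ℂ) * (Real.tanh (m * y) : ℂ) ^ 3)
      ((sech (m * y) : ℂ) ^ 2 * Pc m k y) y := by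
  have hT := hasDerivAt_tanhC m k y
  have hS := hasDerivAt_sechC m k y
  have h1 := hT.const_mul ((-(k : ℂ) ^ 2 - (m : ℂ) ^ 2) / (m : ℂ))
  have h2 := (hS.mul hS).const_mul (3 * Complex.I * (k : ℂ) / 2)
  have h3 := ((hT.mul hT).mul hT).const_mul (m : ℂ)
  have hsum := (h1.add h2).add h3
  have hmC : (m : ℂ) ≠ 0 := by exact_mod_cast hm
  have hm1 : (m : ℂ) * (m : ℂ)⁻¹ = 1 := mul_inv_cancel₀ hmC
  have hs := sech_sq_complex m y
  have hfun : (fun y : ℝ => (-(k : ℂ) ^ 2 - (m : ℂ) ^ 2) / (m : ℂ) * (Real.tanh (m * y) : ℂ)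
        + 3 * Complex.I * (k : ℂ) / 2 * (sech (m * y) : ℂ) ^ 2
        + (m : ℂ) * (Real.tanh (m * y) : ℂ) ^ 3)
      = (fun y : ℝ => (-(k : ℂ) ^ 2 - (m : ℂ) ^ 2) / (m : ℂ) * (Real.tanh (m * y) : ℂ)
        + 3 * Complex.I * (k : ℂ) / 2 * ((sech (m * y) : ℂ) * (sech (m * y) : ℂ))
        + (m : ℂ) * ((Real.tanh (m * y) : ℂ) * (Real.tanh (m * y) : ℂ) * (Real.tanh (m * y) : ℂ))) := by
    funext z; ring
  rw [hfun]
  refine hsum.congr_deriv ?_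
  symm
  simp only [Pc]
  simp only [Pi.mul_apply]
  linear_combination (-(m:ℂ)^2 - 3*(m:ℂ)^2*(((sech (m*y):ℝ):ℂ)*((sech (m*y):ℝ):ℂ)) + (m:ℂ)^3*(m:ℂ)⁻¹ - (k:ℂ)^2 + (k:ℂ)^2*(m:ℂ)*(m:ℂ)⁻¹) * hs
    + ((m:ℂ)^2 - (m:ℂ)^2*(((Real.tanh (m*y):ℝ):ℂ)*((Real.tanh (m*y):ℝ):ℂ)) + (k:ℂ)^2 - (k:ℂ)^2*(((Real.tanh (m*y):ℝ):ℂ)*((Real.tanh (m*y):ℝ):ℂ))) * hm1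

lemma bracket_id (m k : ℝ) (hm : (m : ℂ) ≠ 0) (hk : (k : ℂ) ≠ 0) (x : ℝ) :
    Pc m k x + 3 * Complex.I * (m : ℂ) ^ 2 / (k : ℂ) *
        ((sech (m * x) : ℂ) ^ 2 * (Complex.I * (k : ℂ) / 2 - (m : ℂ) * (Real.tanh (m * x) : ℂ))
          + (-(k : ℂ) ^ 2 / (m : ℂ) -
            ((-(k : ℂ) ^ 2 - (m : ℂ) ^ 2) / (m : ℂ) * (Real.tanh (m * x) : ℂ)
              + 3 * Complex.I * (k : ℂ) / 2 * (sech (m * x) : ℂ) ^ 2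
              + (m : ℂ) * (Real.tanh (m * x) : ℂ) ^ 3)))
      = -(k : ℂ) ^ 2 - 3 * Complex.I * (m : ℂ) * (k : ℂ) + 2 * (m : ℂ) ^ 2 := by
  have hm1 : (m : ℂ) * (m : ℂ)⁻¹ = 1 := mul_inv_cancel₀ hm
  have hk1 : (k : ℂ) * (k : ℂ)⁻¹ = 1 := mul_inv_cancel₀ hk
  have hs := sech_sq_complex m x
  simp only [Pc]
  linear_combination (-3*(k:ℂ)*(m:ℂ)^2*((sech (m*x):ℝ):ℂ)^2*(k:ℂ)⁻¹) * Complex.I_sq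
    + (-3*(m:ℂ)^2 + 3*(k:ℂ)*(m:ℂ)^2*(k:ℂ)⁻¹ - 3*Complex.I*(m:ℂ)^3*((Real.tanh (m*x):ℝ):ℂ)*(k:ℂ)⁻¹) * hs
    + (3*Complex.I*(m:ℂ)^3*((Real.tanh (m*x):ℝ):ℂ)*(k:ℂ)⁻¹ - 3*Complex.I*(k:ℂ)^2*(m:ℂ)*(k:ℂ)⁻¹ + 3*Complex.I*(k:ℂ)^2*(m:ℂ)*((Real.tanh (m*x):ℝ):ℂ)*(k:ℂ)⁻¹) * hm1
    + (3*(m:ℂ)^2 - 3*(m:ℂ)^2*((Real.tanh (m*x):ℝ):ℂ)^2 - 3*Complex.I*(k:ℂ)*(m:ℂ) + 3*Complex.I*(k:ℂ)*(m:ℂ)*((Real.tanh (m*x):ℝ):ℂ)) * hk1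

lemma norm_exp_re_zero {a : ℂ} (h : a.re = 0) : ‖Complex.exp a‖ = 1 := by
  rw [Complex.norm_exp, h, Real.exp_zero]

lemma norm_coe_sech (z : ℝ) : ‖((sech z : ℝ) : ℂ)‖ = sech z := by
  rw [Complex.norm_real, Real.norm_eq_abs, abs_of_pos (sech_pos z)]

lemma norm_coe_tanh_le (z : ℝ) : ‖((Real.tanh z : ℝ) : ℂ)‖ ≤ 1 := by
  rw [Complex.norm_real, Real.norm_eq_abs]; exact abs_tanh_le_one z

lemma norm_coe_pos (r : ℝ) (hr : 0 < r) : ‖((r : ℝ) : ℂ)‖ = r := by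
  rw [Complex.norm_real, Real.norm_eq_abs, abs_of_pos hr]

lemma norm_Pc_le (m k : ℝ) (hm : 0 < m) (hk : 0 < k) (y : ℝ) :
    ‖Pc m k y‖ ≤ k ^ 2 + 3 * m * k + 5 * m ^ 2 := by
  have h1 : ‖(-(k : ℂ) ^ 2)‖ = k ^ 2 := by
    rw [norm_neg, norm_pow, norm_coe_pos k hk]
  have h2 : ‖3 * Complex.I * (m : ℂ) * (k : ℂ) * ((Real.tanh (m * y) : ℝ) : ℂ)‖ ≤ 3 * m * k := by
    rw [norm_mul, norm_mul, norm_mul, norm_mul, Complex.norm_I, norm_coe_pos m hm, norm_coe_pos k hk]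
    have h3 : ‖(3 : ℂ)‖ = 3 := by norm_num
    rw [h3]
    have hle := norm_coe_tanh_le (m * y)
    nlinarith [mul_le_mul_of_nonneg_left hle (by positivity : (0:ℝ) ≤ 3 * m * k)]
  have h4 : ‖2 * (m : ℂ) ^ 2‖ = 2 * m ^ 2 := by
    rw [norm_mul, norm_pow, norm_coe_pos m hm]
    norm_num
  have h5 : ‖3 * (m : ℂ) ^ 2 * ((sech (m * y) : ℝ) : ℂ) ^ 2‖ ≤ 3 * m ^ 2 := by
    rw [norm_mul, norm_mul, norm_pow, norm_pow, norm_coe_pos m hm, norm_coe_sech]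
    have h3 : ‖(3 : ℂ)‖ = 3 := by norm_num
    rw [h3]
    have hle : sech (m * y) ^ 2 ≤ 1 := by nlinarith [sech_le_one (m * y), (sech_pos (m * y)).le]
    nlinarith [mul_le_mul_of_nonneg_left hle (by positivity : (0:ℝ) ≤ 3 * m ^ 2)]
  have t1 := norm_sub_le (-(k : ℂ) ^ 2 - 3 * Complex.I * (m : ℂ) * (k : ℂ) * ((Real.tanh (m * y) : ℝ) : ℂ)
      + 2 * (m : ℂ) ^ 2) (3 * (m : ℂ) ^ 2 * ((sech (m * y) : ℝ) : ℂ) ^ 2)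
  have t2 := norm_add_le (-(k : ℂ) ^ 2 - 3 * Complex.I * (m : ℂ) * (k : ℂ) * ((Real.tanh (m * y) : ℝ) : ℂ))
      (2 * (m : ℂ) ^ 2)
  have t3 := norm_sub_le (-(k : ℂ) ^ 2) (3 * Complex.I * (m : ℂ) * (k : ℂ) * ((Real.tanh (m * y) : ℝ) : ℂ))
  rw [Pc]
  linarith

lemma continuous_PcC (m k : ℝ) : Continuous fun y : ℝ => Pc m k y := by
  simp only [Pc]
  have hT : Continuous fun y : ℝ => ((Real.tanh (m * y) : ℝ) : ℂ) :=
    Complex.continuous_ofReal.comp (continuous_tanh.comp (continuous_const.mul continuous_id))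
  have hS : Continuous fun y : ℝ => ((sech (m * y) : ℝ) : ℂ) :=
    Complex.continuous_ofReal.comp (continuous_sech.comp (continuous_const.mul continuous_id))
  exact ((continuous_const.sub (continuous_const.mul hT)).add continuous_const).sub
    (continuous_const.mul (hS.pow 2))

lemma integrable_mul_sech_sq_Pc (m k : ℝ) (hm : 0 < m) (hk : 0 < k) (c : ℝ → ℂ)
    (hc : Continuous c) (M : ℝ) (hM : ∀ y, ‖c y‖ ≤ M) :
    Integrable fun y : ℝ => c y * (((sech (m * y) : ℝ) : ℂ) ^ 2 * Pc m k y) := by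
  have hM0 : 0 ≤ M := le_trans (norm_nonneg _) (hM 0)
  have hB : (0:ℝ) < k ^ 2 + 3 * m * k + 5 * m ^ 2 := by positivity
  have hS : Continuous fun y : ℝ => ((sech (m * y) : ℝ) : ℂ) :=
    Complex.continuous_ofReal.comp (continuous_sech.comp (continuous_const.mul continuous_id))
  apply Integrable.mono ((integrable_sech_sq m hm).const_mul (M * (k ^ 2 + 3 * m * k + 5 * m ^ 2)))
    (hc.mul ((hS.pow 2).mul (continuous_PcC m k))).aestronglyMeasurable
  apply ae_of_all
  intro y
  simp only [Pi.mul_apply, Pi.pow_apply]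
  rw [norm_mul, norm_mul, norm_pow, norm_coe_sech]
  rw [Real.norm_eq_abs, abs_of_nonneg (by positivity)]
  have b1 := hM y
  have b2 := norm_Pc_le m k hm hk y
  have b3 := (sech_pos (m * y)).le
  have b4 := norm_nonneg (Pc m k y)
  have b5 := norm_nonneg (c y)
  have b6 := sech_le_one (m * y)
  nlinarith [sq_nonneg (sech (m * y)), mul_le_mul b1 b2 b4 hM0]

lemma tendsto_G_atBot (m k : ℝ) (hm : 0 < m) (hk : 0 < k) :
    Tendsto (fun y : ℝ => Complex.exp (2 * Complex.I * (k : ℂ) * (y : ℂ)) *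
        ((sech (m * y) : ℂ) ^ 2 * (Complex.I * (k : ℂ) / 2 - (m : ℂ) * (Real.tanh (m * y) : ℂ))))
      atBot (𝓝 0) := by
  apply squeeze_zero_norm (a := fun y : ℝ => sech (m * y) ^ 2 * (k / 2 + m))
  · intro y
    rw [norm_mul, norm_exp_re_zero (by simp), one_mul, norm_mul, norm_pow, norm_coe_sech]
    have h1 : ‖Complex.I * (k : ℂ) / 2 - (m : ℂ) * ((Real.tanh (m * y) : ℝ) : ℂ)‖ ≤ k / 2 + m := by
      refine le_trans (norm_sub_le _ _) ?_
      have e1 : ‖Complex.I * (k : ℂ) / 2‖ = k / 2 := by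
        rw [norm_div, norm_mul, Complex.norm_I, one_mul, norm_coe_pos k hk]
        norm_num
      have e2 : ‖(m : ℂ) * ((Real.tanh (m * y) : ℝ) : ℂ)‖ ≤ m := by
        rw [norm_mul, norm_coe_pos m hm]
        nlinarith [norm_coe_tanh_le (m * y)]
      linarith
    have h2 : (0:ℝ) ≤ sech (m * y) ^ 2 := sq_nonneg _
    nlinarith [mul_le_mul_of_nonneg_left h1 h2]
  · have h0 : Tendsto (fun y : ℝ => sech (m * y)) atBot (𝓝 0) :=
      tendsto_sech_atBot.comp (tendsto_id.const_mul_atBot hm)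
    have := (h0.pow 2).mul_const (k / 2 + m)
    simpa using this

lemma tendsto_F_atTop (m k : ℝ) (hm : 0 < m) :
    Tendsto (fun y : ℝ => (-(k : ℂ) ^ 2 - (m : ℂ) ^ 2) / (m : ℂ) * (Real.tanh (m * y) : ℂ)
        + 3 * Complex.I * (k : ℂ) / 2 * (sech (m * y) : ℂ) ^ 2
        + (m : ℂ) * (Real.tanh (m * y) : ℂ) ^ 3) atTop (𝓝 (-(k : ℂ) ^ 2 / (m : ℂ))) := by
  have hmy : Tendsto (fun y : ℝ => m * y) atTop atTop := tendsto_id.const_mul_atTop hm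
  have hT : Tendsto (fun y : ℝ => ((Real.tanh (m * y) : ℝ) : ℂ)) atTop (𝓝 1) := by
    have := (Complex.continuous_ofReal.tendsto 1).comp (tendsto_tanh_atTop.comp hmy)
    simpa only [Function.comp_def, Complex.ofReal_one] using this
  have hS : Tendsto (fun y : ℝ => ((sech (m * y) : ℝ) : ℂ)) atTop (𝓝 0) := by
    have := (Complex.continuous_ofReal.tendsto 0).comp (tendsto_sech_atTop.comp hmy)
    simpa only [Function.comp_def, Complex.ofReal_zero] using this
  have hlim := ((hT.const_mul ((-(k : ℂ) ^ 2 - (m : ℂ) ^ 2) / (m : ℂ))).add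
    ((hS.pow 2).const_mul (3 * Complex.I * (k : ℂ) / 2))).add ((hT.pow 3).const_mul (m : ℂ))
  have hm0 : (m : ℂ) ≠ 0 := by
    exact_mod_cast hm.ne'
  have hval : (-(k : ℂ) ^ 2 - (m : ℂ) ^ 2) / (m : ℂ) * 1 + 3 * Complex.I * (k : ℂ) / 2 * 0 ^ 2
      + (m : ℂ) * 1 ^ 3 = -(k : ℂ) ^ 2 / (m : ℂ) := by
    field_simp
    ring
  rwa [hval] at hlim

/-- Lippmann–Schwinger identity for the boundary value of the free resolvent from
below: for every `k > 0` and every `x`, the integral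
`∫ e^{−ik|x−y|}·sech²(m y)·E_k(y) dy` converges absolutely and
`E_k(x) + (3im²/k)·∫ e^{−ik|x−y|}·sech²(m y)·E_k(y) dy = S(k)·e^{ikx}`,
where `S(k) = (−k² − 3imk + 2m²)²/((k²+m²)(k²+4m²)) = e^{2iδ_k}`. -/
theorem lippmann_schwinger_minus (m : ℝ) (hm : 0 < m) (k : ℝ) (hk : 0 < k) (x : ℝ) :
    Integrable (fun y : ℝ =>
      Complex.exp (-(Complex.I * (k : ℂ) * (|x - y| : ℝ))) *
        (sech (m * y) : ℂ) ^ 2 * genEig m k y) ∧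
    genEig m k x + (3 * Complex.I * (m : ℂ) ^ 2 / (k : ℂ)) *
        ∫ y : ℝ, Complex.exp (-(Complex.I * (k : ℂ) * (|x - y| : ℝ))) *
          (sech (m * y) : ℂ) ^ 2 * genEig m k y
      = scatteringFactor m k * Complex.exp (Complex.I * (k : ℂ) * (x : ℂ)) := by
  have hk0 : (k : ℂ) ≠ 0 := by exact_mod_cast hk.ne'
  have hm0 : (m : ℂ) ≠ 0 := by exact_mod_cast hm.ne'
  have hgen : ∀ y : ℝ, genEig m k y =
      (-(k : ℂ) ^ 2 - 3 * Complex.I * (m : ℂ) * (k : ℂ) + 2 * (m : ℂ) ^ 2) * Pc m k y *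
        Complex.exp (Complex.I * (k : ℂ) * (y : ℂ)) /
        (((k : ℂ) ^ 2 + (m : ℂ) ^ 2) * ((k : ℂ) ^ 2 + 4 * (m : ℂ) ^ 2)) := by
    intro y
    simp only [genEig, cNorm, Pc, if_pos hk.le]
  -- continuity facts
  have hexpc : Continuous fun y : ℝ => Complex.exp (2 * Complex.I * (k : ℂ) * (y : ℂ)) :=
    Complex.continuous_exp.comp (continuous_const.mul Complex.continuous_ofReal)
  have hexpc1 : Continuous fun y : ℝ => Complex.exp (Complex.I * (k : ℂ) * (y : ℂ)) :=
    Complex.continuous_exp.comp (continuous_const.mul Complex.continuous_ofReal)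
  have habsc : Continuous fun y : ℝ => Complex.exp (-(Complex.I * (k : ℂ) * (|x - y| : ℝ))) :=
    Complex.continuous_exp.comp ((continuous_const.mul
      (Complex.continuous_ofReal.comp ((continuous_const.sub continuous_id).abs))).neg)
  have hexp1 : ∀ y : ℝ, ‖Complex.exp (-(Complex.I * (k : ℂ) * (|x - y| : ℝ)))‖ = 1 :=
    fun y => norm_exp_re_zero (by simp)
  have hexp2 : ∀ y : ℝ, ‖Complex.exp (Complex.I * (k : ℂ) * (y : ℂ))‖ = 1 :=
    fun y => norm_exp_re_zero (by simp)
  have hexp3 : ∀ y : ℝ, ‖Complex.exp (2 * Complex.I * (k : ℂ) * (y : ℂ))‖ = 1 :=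
    fun y => norm_exp_re_zero (by simp)
  -- integrability
  have hI1 : Integrable fun y : ℝ => ((sech (m * y) : ℝ) : ℂ) ^ 2 * Pc m k y := by
    have := integrable_mul_sech_sq_Pc m k hm hk (fun _ => 1) continuous_const 1 (by simp)
    simpa using this
  have hI2 : Integrable fun y : ℝ => Complex.exp (2 * Complex.I * (k : ℂ) * (y : ℂ)) *
      (((sech (m * y) : ℝ) : ℂ) ^ 2 * Pc m k y) :=
    integrable_mul_sech_sq_Pc m k hm hk _ hexpc 1 (fun y => le_of_eq (hexp3 y))
  have hI0 : Integrable fun y : ℝ =>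
      Complex.exp (-(Complex.I * (k : ℂ) * (|x - y| : ℝ))) *
        (sech (m * y) : ℂ) ^ 2 * genEig m k y := by
    have heq : (fun y : ℝ => Complex.exp (-(Complex.I * (k : ℂ) * (|x - y| : ℝ))) *
        (sech (m * y) : ℂ) ^ 2 * genEig m k y)
        = fun y : ℝ => (Complex.exp (-(Complex.I * (k : ℂ) * (|x - y| : ℝ))) *
          ((-(k : ℂ) ^ 2 - 3 * Complex.I * (m : ℂ) * (k : ℂ) + 2 * (m : ℂ) ^ 2) *
            Complex.exp (Complex.I * (k : ℂ) * (y : ℂ)) /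
            (((k : ℂ) ^ 2 + (m : ℂ) ^ 2) * ((k : ℂ) ^ 2 + 4 * (m : ℂ) ^ 2)))) *
          (((sech (m * y) : ℝ) : ℂ) ^ 2 * Pc m k y) := by
      funext y
      rw [hgen y]
      ring
    rw [heq]
    refine integrable_mul_sech_sq_Pc m k hm hk _
      (habsc.mul ((continuous_const.mul hexpc1).div_const _))
      (‖-(k : ℂ) ^ 2 - 3 * Complex.I * (m : ℂ) * (k : ℂ) + 2 * (m : ℂ) ^ 2‖ /
        ‖((k : ℂ) ^ 2 + (m : ℂ) ^ 2) * ((k : ℂ) ^ 2 + 4 * (m : ℂ) ^ 2)‖) (fun y => ?_)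
    rw [norm_mul, hexp1, one_mul, norm_div, norm_mul, hexp2, mul_one]
  refine ⟨hI0, ?_⟩
  -- FTC evaluations
  have hleftFTC : (∫ y in Iic x, Complex.exp (2 * Complex.I * (k : ℂ) * (y : ℂ)) *
      (((sech (m * y) : ℝ) : ℂ) ^ 2 * Pc m k y))
      = Complex.exp (2 * Complex.I * (k : ℂ) * (x : ℂ)) *
        (((sech (m * x) : ℝ) : ℂ) ^ 2 *
          (Complex.I * (k : ℂ) / 2 - (m : ℂ) * (Real.tanh (m * x) : ℂ))) - 0 :=
    integral_Iic_of_hasDerivAt_of_tendsto' (fun y _ => hasDerivAt_G m k y)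
      hI2.integrableOn (tendsto_G_atBot m k hm hk)
  have hrightFTC : (∫ y in Ioi x, ((sech (m * y) : ℝ) : ℂ) ^ 2 * Pc m k y)
      = -(k : ℂ) ^ 2 / (m : ℂ) -
        ((-(k : ℂ) ^ 2 - (m : ℂ) ^ 2) / (m : ℂ) * (Real.tanh (m * x) : ℂ)
          + 3 * Complex.I * (k : ℂ) / 2 * (sech (m * x) : ℂ) ^ 2
          + (m : ℂ) * (Real.tanh (m * x) : ℂ) ^ 3) :=
    integral_Ioi_of_hasDerivAt_of_tendsto' (fun y _ => hasDerivAt_F m k hm.ne' y)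
      hI1.integrableOn (tendsto_F_atTop m k hm)
  -- rewrite the two half-line integrals of the actual integrand
  have hleft : (∫ y in Iic x, Complex.exp (-(Complex.I * (k : ℂ) * (|x - y| : ℝ))) *
      (sech (m * y) : ℂ) ^ 2 * genEig m k y)
      = ((-(k : ℂ) ^ 2 - 3 * Complex.I * (m : ℂ) * (k : ℂ) + 2 * (m : ℂ) ^ 2) /
          (((k : ℂ) ^ 2 + (m : ℂ) ^ 2) * ((k : ℂ) ^ 2 + 4 * (m : ℂ) ^ 2)) *
          Complex.exp (-(Complex.I * (k : ℂ) * (x : ℂ)))) *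
        (Complex.exp (2 * Complex.I * (k : ℂ) * (x : ℂ)) *
          (((sech (m * x) : ℝ) : ℂ) ^ 2 *
            (Complex.I * (k : ℂ) / 2 - (m : ℂ) * (Real.tanh (m * x) : ℂ))) - 0) := by
    rw [setIntegral_congr_fun measurableSet_Iic (g := fun y : ℝ =>
      ((-(k : ℂ) ^ 2 - 3 * Complex.I * (m : ℂ) * (k : ℂ) + 2 * (m : ℂ) ^ 2) /
        (((k : ℂ) ^ 2 + (m : ℂ) ^ 2) * ((k : ℂ) ^ 2 + 4 * (m : ℂ) ^ 2)) *
        Complex.exp (-(Complex.I * (k : ℂ) * (x : ℂ)))) *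
      (Complex.exp (2 * Complex.I * (k : ℂ) * (y : ℂ)) *
        (((sech (m * y) : ℝ) : ℂ) ^ 2 * Pc m k y))) ?_, MeasureTheory.integral_const_mul, hleftFTC]
    intro y hy
    beta_reduce
    have h1 : |x - y| = x - y := abs_of_nonneg (by simp only [mem_Iic] at hy; linarith)
    rw [hgen y, h1]
    have hE : Complex.exp (-(Complex.I * (k : ℂ) * ((x - y : ℝ) : ℂ))) *
        Complex.exp (Complex.I * (k : ℂ) * (y : ℂ))
        = Complex.exp (-(Complex.I * (k : ℂ) * (x : ℂ))) *
          Complex.exp (2 * Complex.I * (k : ℂ) * (y : ℂ)) := by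
      rw [← Complex.exp_add, ← Complex.exp_add]
      congr 1
      push_cast
      ring
    linear_combination (((sech (m * y) : ℝ) : ℂ) ^ 2 *
      (-(k : ℂ) ^ 2 - 3 * Complex.I * (m : ℂ) * (k : ℂ) + 2 * (m : ℂ) ^ 2) * Pc m k y /
      (((k : ℂ) ^ 2 + (m : ℂ) ^ 2) * ((k : ℂ) ^ 2 + 4 * (m : ℂ) ^ 2))) * hE
  have hright : (∫ y in Ioi x, Complex.exp (-(Complex.I * (k : ℂ) * (|x - y| : ℝ))) *
      (sech (m * y) : ℂ) ^ 2 * genEig m k y)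
      = ((-(k : ℂ) ^ 2 - 3 * Complex.I * (m : ℂ) * (k : ℂ) + 2 * (m : ℂ) ^ 2) /
          (((k : ℂ) ^ 2 + (m : ℂ) ^ 2) * ((k : ℂ) ^ 2 + 4 * (m : ℂ) ^ 2)) *
          Complex.exp (Complex.I * (k : ℂ) * (x : ℂ))) *
        (-(k : ℂ) ^ 2 / (m : ℂ) -
          ((-(k : ℂ) ^ 2 - (m : ℂ) ^ 2) / (m : ℂ) * (Real.tanh (m * x) : ℂ)
            + 3 * Complex.I * (k : ℂ) / 2 * (sech (m * x) : ℂ) ^ 2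
            + (m : ℂ) * (Real.tanh (m * x) : ℂ) ^ 3)) := by
    rw [setIntegral_congr_fun measurableSet_Ioi (g := fun y : ℝ =>
      ((-(k : ℂ) ^ 2 - 3 * Complex.I * (m : ℂ) * (k : ℂ) + 2 * (m : ℂ) ^ 2) /
        (((k : ℂ) ^ 2 + (m : ℂ) ^ 2) * ((k : ℂ) ^ 2 + 4 * (m : ℂ) ^ 2)) *
        Complex.exp (Complex.I * (k : ℂ) * (x : ℂ))) *
      (((sech (m * y) : ℝ) : ℂ) ^ 2 * Pc m k y)) ?_, MeasureTheory.integral_const_mul, hrightFTC]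
    intro y hy
    beta_reduce
    have h1 : |x - y| = -(x - y) := abs_of_nonpos (by simp only [mem_Ioi] at hy; linarith)
    rw [hgen y, h1]
    have hE : Complex.exp (-(Complex.I * (k : ℂ) * ((-(x - y) : ℝ) : ℂ))) *
        Complex.exp (Complex.I * (k : ℂ) * (y : ℂ))
        = Complex.exp (Complex.I * (k : ℂ) * (x : ℂ)) := by
      rw [← Complex.exp_add]
      congr 1
      push_cast
      ring
    linear_combination (((sech (m * y) : ℝ) : ℂ) ^ 2 *
      (-(k : ℂ) ^ 2 - 3 * Complex.I * (m : ℂ) * (k : ℂ) + 2 * (m : ℂ) ^ 2) * Pc m k y /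
      (((k : ℂ) ^ 2 + (m : ℂ) ^ 2) * ((k : ℂ) ^ 2 + 4 * (m : ℂ) ^ 2))) * hE
  rw [← intervalIntegral.integral_Iic_add_Ioi hI0.integrableOn hI0.integrableOn,
    hleft, hright, hgen x]
  simp only [scatteringFactor]
  have hbr := bracket_id m k hm0 hk0 x
  have hEE : Complex.exp (-(Complex.I * (k : ℂ) * (x : ℂ))) *
      Complex.exp (2 * Complex.I * (k : ℂ) * (x : ℂ))
      = Complex.exp (Complex.I * (k : ℂ) * (x : ℂ)) := by
    rw [← Complex.exp_add]
    congr 1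
    ring
  linear_combination ((-(k : ℂ) ^ 2 - 3 * Complex.I * (m : ℂ) * (k : ℂ) + 2 * (m : ℂ) ^ 2) /
      (((k : ℂ) ^ 2 + (m : ℂ) ^ 2) * ((k : ℂ) ^ 2 + 4 * (m : ℂ) ^ 2)) *
      Complex.exp (Complex.I * (k : ℂ) * (x : ℂ))) * hbr
    + (3 * Complex.I * (m : ℂ) ^ 2 / (k : ℂ) *
      ((-(k : ℂ) ^ 2 - 3 * Complex.I * (m : ℂ) * (k : ℂ) + 2 * (m : ℂ) ^ 2) /
        (((k : ℂ) ^ 2 + (m : ℂ) ^ 2) * ((k : ℂ) ^ 2 + 4 * (m : ℂ) ^ 2))) *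
      ((sech (m * x) : ℂ) ^ 2 *
        (Complex.I * (k : ℂ) / 2 - (m : ℂ) * (Real.tanh (m * x) : ℂ)))) * hEE
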